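/- If { j_i }_{i=1}^{k} is an a-reduced family of integers, then Σ_{i=1}^{k} j_i · s_i(a) < s_{k+1}(a). -/
import Mathlib


/-- `sF a k = Σ_{i=0}^{k-1} a^i` (so `sF a 0 = 0`). -/
def sF (a k : ℕ) : ℕ := ∑ i ∈ Finset.range k, a ^ i

/-- `tF a b c k = a^k * c + b * sF a k`. -/
def tF (a b c k : ℕ) : ℕ := a ^ k * c + b * sF a k

/-- A θ_{a,b}-semigroup: contains 0, closed under addition, and closed under
`x ↦ a*x + b` on nonzero elements. -/
def IsThetaSG (a b : ℕ) (S : Set ℕ) : Prop :=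
  0 ∈ S ∧ (∀ x ∈ S, ∀ y ∈ S, x + y ∈ S) ∧ ∀ y ∈ S, y ≠ 0 → a * y + b ∈ S

/-- `Gset a b c` : the smallest θ_{a,b}-semigroup containing `c`. -/
def Gset (a b c : ℕ) : Set ℕ := ⋂₀ {S : Set ℕ | IsThetaSG a b S ∧ c ∈ S}

/-- `Hmon a b c` : additive submonoid generated by the `tF a b c k`. -/
def Hmon (a b c : ℕ) : AddSubmonoid ℕ :=
  AddSubmonoid.closure {x | ∃ k, x = tF a b c k}

/-- `{j_i}_{i=1}^k` is `a`-reduced. -/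

lemma sF_succ (a k : ℕ) : sF a (k + 1) = a * sF a k + 1 := by
  simp [sF, Finset.sum_range_succ', Finset.mul_sum, pow_succ, mul_comm]

lemma key (a : ℕ) (j : ℕ → ℕ) :
    ∀ k, (∀ i, 1 ≤ i → i ≤ k → j i ≤ a) →
    (∀ m, 1 ≤ m → m ≤ k → j m = a → ∀ i, 1 ≤ i → i < m → j i = 0) →
    ∑ i ∈ Finset.Icc 1 k, j i * sF a i ≤ a * sF a k := by
  intro k
  induction k with
  | zero => simp [sF]
  | succ n ih =>
    intro hle hred
    rw [show n + 1 = n + 1 from rfl, Finset.sum_Icc_succ_top (by omega)]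
    by_cases h : j (n + 1) = a
    · have hz : ∀ i ∈ Finset.Icc 1 n, j i * sF a i = 0 := by
        intro i hi
        simp only [Finset.mem_Icc] at hi
        rw [hred (n+1) (by omega) le_rfl h i hi.1 (by omega)]
        ring
      rw [Finset.sum_eq_zero hz, h]
      simp
    · have h1 : j (n + 1) ≤ a - 1 := by
        have := hle (n+1) (by omega) le_rfl; omega
      have h2 : ∑ i ∈ Finset.Icc 1 n, j i * sF a i ≤ a * sF a n :=
        ih (fun i hi hi' => hle i hi (by omega))
           (fun m hm hm' => hred m hm (by omega))
      calc ∑ i ∈ Finset.Icc 1 n, j i * sF a i + j (n + 1) * sF a (n + 1)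
          ≤ a * sF a n + (a - 1) * sF a (n + 1) :=
            Nat.add_le_add h2 (Nat.mul_le_mul_right _ h1)
        _ ≤ a * sF a (n + 1) := by
            have := sF_succ a n
            rcases Nat.eq_zero_or_pos a with rfl | hap
            · simp
            · have : a * sF a n + 1 = sF a (n+1) := (sF_succ a n).symm
              nlinarith [Nat.sub_add_cancel hap]

def AReduced (a k : ℕ) (j : ℕ → ℕ) : Prop :=
  (∀ i, 1 ≤ i → i ≤ k → j i ≤ a) ∧ j k ≠ 0 ∧
  ∀ m, 1 ≤ m → m ≤ k → j m = a → ∀ i, 1 ≤ i → i < m → j i = 0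

theorem stmt13 (a : ℕ) (ha : 0 < a) (k : ℕ) (hk : 1 ≤ k)
    (j : ℕ → ℕ) (hj : AReduced a k j) :
    ∑ i ∈ Finset.Icc 1 k, j i * sF a i < sF a (k + 1) := by
  obtain ⟨h1, h2, h3⟩ := hj
  have := key a j k h1 h3
  rw [sF_succ]
  omega
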